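/- For d ∈ ℕ set n(d) := ⌊d/2⌋ and define A_0(d, k) := 2^{−d} C(d, n(d) − k) for k ∈ ℤ (with the convention C(n,m) = 0 for m < 0 or m > n), and recursively A_a(d, k) := A_{a−1}(d, k) − A_{a−1}(d, k+1) for a ≥ 1. Fix a ∈ ℕ and k ∈ ℤ such that either a is even or k ≥ 0. Then there exist constants 0 < c ≤ C and D₀ ∈ ℕ (depending on a and k) such that for all d ≥ D₀: c · d^{−1/2 − ⌈a/2⌉} ≤ |A_a(d, k)| ≤ C · d^{−1/2 − ⌈a/2⌉}, and moreover sign(A_a(d, k)) = (−1)^{⌊a/2⌋}. -/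

import Mathlib

/-- Binomial coefficient `C(n,m)` for integer `m`, with the convention that it vanishes
for `m < 0` (and automatically for `m > n`). -/
noncomputable def chooseZ (n : ℕ) (m : ℤ) : ℝ := if 0 ≤ m then (n.choose m.toNat : ℝ) else 0

/-- The iterated finite difference `A_a(d,k)`: `A_0(d,k) = 2^{−d} C(d, ⌊d/2⌋ − k)` and
`A_a(d,k) = A_{a−1}(d,k) − A_{a−1}(d,k+1)`. -/
noncomputable def Afun (d : ℕ) : ℕ → ℤ → ℝ
  | 0, k => chooseZ d ((d / 2 : ℕ) - k) / 2 ^ d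
  | a + 1, k => Afun d a k - Afun d a (k + 1)

open Finset


/-! ### Section 1: discrete difference calculus on ℕ → ℝ -/

noncomputable def dd (f : ℕ → ℝ) : ℕ → ℝ := fun t => f (t + 1) - f t

lemma dd_iter_succ' (f : ℕ → ℝ) (m : ℕ) : dd^[m+1] f = dd^[m] (dd f) :=
  Function.iterate_succ_apply dd m f

lemma dd_iter_succ (f : ℕ → ℝ) (m : ℕ) : dd^[m+1] f = dd (dd^[m] f) :=
  Function.iterate_succ_apply' dd m f

lemma dd_iter_shift (f : ℕ → ℝ) (m t : ℕ) :
    dd^[m] f (t + 1) = dd^[m] f t + dd^[m+1] f t := by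
  rw [dd_iter_succ]
  simp [dd]

lemma dd_add (f g : ℕ → ℝ) : dd (f + g) = dd f + dd g := by
  funext t; simp [dd]; ring

lemma dd_iter_add (f g : ℕ → ℝ) (m : ℕ) : dd^[m] (f + g) = dd^[m] f + dd^[m] g := by
  induction m with
  | zero => rfl
  | succ m ih => rw [dd_iter_succ, dd_iter_succ, dd_iter_succ, ih, dd_add]

lemma dd_smul (c : ℝ) (f : ℕ → ℝ) : dd (fun t => c * f t) = fun t => c * dd f t := by
  funext t; simp [dd]; ring

lemma dd_iter_smul (c : ℝ) (f : ℕ → ℝ) (m : ℕ) :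
    dd^[m] (fun t => c * f t) = fun t => c * dd^[m] f t := by
  induction m with
  | zero => rfl
  | succ m ih => rw [dd_iter_succ, dd_iter_succ, ih, dd_smul]

lemma dd_zero_fun : dd (fun _ => (0:ℝ)) = fun _ => (0:ℝ) := by
  funext t; simp [dd]

lemma dd_iter_zero_fun (m : ℕ) : dd^[m] (fun _ => (0:ℝ)) = fun _ => (0:ℝ) := by
  induction m with
  | zero => rfl
  | succ m ih => rw [dd_iter_succ, ih, dd_zero_fun]

lemma dd_iter_sum {α : Type*} (s : Finset α) (f : α → ℕ → ℝ) (m : ℕ) :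
    dd^[m] (fun t => ∑ i ∈ s, f i t) = fun t => ∑ i ∈ s, dd^[m] (f i) t := by
  classical
  induction s using Finset.induction_on with
  | empty => simpa using dd_iter_zero_fun m
  | insert x s hx ih =>
      have : (fun t => ∑ i ∈ insert x s, f i t)
          = (f x) + (fun t => ∑ i ∈ s, f i t) := by
        funext t; simp [Finset.sum_insert hx]
      rw [this, dd_iter_add, ih]
      funext t; simp [Finset.sum_insert hx]

/-- Discrete Leibniz rule. -/
lemma dd_iter_mul (f g : ℕ → ℝ) (m : ℕ) (t : ℕ) :
    dd^[m] (fun s => f s * g s) t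
      = ∑ j ∈ range (m+1), (m.choose j : ℝ) * dd^[j] f t * dd^[m-j] g (t+j) := by
  induction m generalizing t with
  | zero => simp
  | succ m ih =>
      have h1 : dd^[m+1] (fun s => f s * g s) t
          = dd^[m] (fun s => f s * g s) (t+1) - dd^[m] (fun s => f s * g s) t := by
        rw [dd_iter_succ]; rfl
      rw [h1, ih (t+1), ih t, ← Finset.sum_sub_distrib]
      have key : ∀ j ∈ range (m+1),
          (m.choose j : ℝ) * dd^[j] f (t+1) * dd^[m-j] g (t+1+j)
            - (m.choose j : ℝ) * dd^[j] f t * dd^[m-j] g (t+j)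
          = ((m.choose j : ℝ) * dd^[j] f t * dd^[m+1-j] g (t+j))
            + ((m.choose j : ℝ) * dd^[j+1] f t * dd^[m-j] g (t+j+1)) := by
        intro j hj
        have hj' : j ≤ m := by simpa using Nat.lt_succ_iff.mp (mem_range.mp hj)
        have e1 : dd^[j] f (t+1) = dd^[j] f t + dd^[j+1] f t := dd_iter_shift f j t
        have e2 : dd^[m-j] g (t+1+j) = dd^[m-j] g (t+j) + dd^[m-j+1] g (t+j) := by
          have : t+1+j = (t+j)+1 := by ring
          rw [this]; exact dd_iter_shift g (m-j) (t+j)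
        have e3 : m - j + 1 = m + 1 - j := by omega
        have e4 : dd^[m-j] g (t+j+1) = dd^[m-j] g (t+j) + dd^[m-j+1] g (t+j) := by
          have : t+j+1 = (t+j)+1 := rfl
          rw [this]; exact dd_iter_shift g (m-j) (t+j)
        rw [e1, e2, e4, ← e3]; ring
      rw [Finset.sum_congr rfl key, Finset.sum_add_distrib]
      -- first sum: extend to range (m+2)
      have hP : ∑ j ∈ range (m+1), (m.choose j : ℝ) * dd^[j] f t * dd^[m+1-j] g (t+j)
          = ∑ j ∈ range (m+2), (m.choose j : ℝ) * dd^[j] f t * dd^[m+1-j] g (t+j) := by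
        rw [Finset.sum_range_succ (n := m+1)]
        simp [Nat.choose_succ_self]
      -- second sum: reindex
      have hQ : ∑ j ∈ range (m+1), (m.choose j : ℝ) * dd^[j+1] f t * dd^[m-j] g (t+j+1)
          = ∑ j ∈ range (m+2), (if j = 0 then (0:ℝ) else (m.choose (j-1) : ℝ)) * dd^[j] f t * dd^[m+1-j] g (t+j) := by
        rw [Finset.sum_range_succ' (n := m+1)]
        norm_num
        apply Finset.sum_congr rfl
        intro i _
        have h2 : m + 1 - (i+1) = m - i := by omega
        have h3 : t + (i+1) = t + i + 1 := by ring
        simp [h2, h3]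
      rw [hP, hQ, ← Finset.sum_add_distrib]
      apply Finset.sum_congr rfl
      intro j hj
      have hj' : j < m + 2 := mem_range.mp hj
      rcases Nat.eq_zero_or_pos j with h0 | hpos
      · subst h0; simp
      · obtain ⟨i, rfl⟩ := Nat.exists_eq_succ_of_ne_zero (Nat.pos_iff_ne_zero.mp hpos)
        simp only [if_neg (Nat.succ_ne_zero i), Nat.succ_sub_one]
        have : ((m+1).choose (i+1) : ℝ) = (m.choose (i+1) : ℝ) + (m.choose i : ℝ) := by
          rw [Nat.choose_succ_succ m i]; push_cast; ring
        rw [this]; ring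

/-! ### degree bounds -/

def HasDeg (f : ℕ → ℝ) (D : ℕ) : Prop := ∀ t, dd^[D+1] f t = 0

lemma HasDeg.kill {f : ℕ → ℝ} {D : ℕ} (h : HasDeg f D) {b : ℕ} (hb : D < b) :
    ∀ t, dd^[b] f t = 0 := by
  intro t
  obtain ⟨c, rfl⟩ : ∃ c, b = c + (D+1) := ⟨b - (D+1), by omega⟩
  rw [Function.iterate_add_apply]
  have h0 : dd^[D+1] f = fun _ => (0:ℝ) := funext h
  rw [h0, dd_iter_zero_fun]

lemma HasDeg.mono {f : ℕ → ℝ} {D E : ℕ} (h : HasDeg f D) (hDE : D ≤ E) : HasDeg f E := by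
  intro t; exact h.kill (by omega) t

lemma hasDeg_const (c : ℝ) : HasDeg (fun _ => c) 0 := by intro t; simp [dd]

lemma hasDeg_linear (p q : ℝ) : HasDeg (fun t => p + q * t) 1 := by
  intro t
  show dd (dd^[1] fun t => p + q * t) t = 0
  have : dd^[1] (fun t : ℕ => p + q * t) = dd (fun t : ℕ => p + q * t) := rfl
  rw [this]
  simp only [dd]
  push_cast
  ring

lemma HasDeg.mul {f g : ℕ → ℝ} {D E : ℕ} (hf : HasDeg f D) (hg : HasDeg g E) :
    HasDeg (fun t => f t * g t) (D + E) := by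
  intro t
  rw [dd_iter_mul]
  apply Finset.sum_eq_zero
  intro j hj
  rcases le_or_gt j D with h | h
  · have : dd^[D+E+1-j] g (t+j) = 0 := hg.kill (by omega) (t+j)
    rw [this, mul_zero]
  · have : dd^[j] f t = 0 := hf.kill h t
    rw [this, mul_zero, zero_mul]

lemma HasDeg.smul {f : ℕ → ℝ} {D : ℕ} (c : ℝ) (hf : HasDeg f D) :
    HasDeg (fun t => c * f t) D := by
  intro t; rw [dd_iter_smul]; simp only; rw [hf t, mul_zero]

lemma HasDeg.sum {α : Type*} (s : Finset α) (f : α → ℕ → ℝ) (D : ℕ)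
    (h : ∀ i ∈ s, HasDeg (f i) D) : HasDeg (fun t => ∑ i ∈ s, f i t) D := by
  intro t
  rw [dd_iter_sum]
  exact Finset.sum_eq_zero fun i hi => h i hi t

lemma hasDeg_linear_pow (p q : ℝ) (m : ℕ) : HasDeg (fun t => (p + q * t)^m) m := by
  induction m with
  | zero => simpa using hasDeg_const 1
  | succ m ih =>
      have := (hasDeg_linear p q).mul ih
      have h2 : (fun t : ℕ => (p + q*t) * (p + q*t)^m) = fun t : ℕ => (p + q*t)^(m+1) := by
        funext t; ring
      rw [h2] at this
      simpa [Nat.add_comm] using this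
/-! ### Section 3: expansion coefficients -/

noncomputable def cc (K : ℝ) : ℕ → ℕ → ℝ
  | 0 => fun _ => 1
  | (i+1) => fun t => ∑ s ∈ range t,
      (-(2*(K+s)+1) * ∑ m ∈ range (i+1), (-1:ℝ)^m * (K+s+1)^m * cc K (i-m) s)
  decreasing_by omega

noncomputable def gg (K : ℝ) (i : ℕ) (t : ℕ) : ℝ :=
  if i = 0 then 0 else
    -(2*(K+t)+1) * ∑ m ∈ range i, (-1:ℝ)^m * (K+t+1)^m * cc K (i-1-m) t

lemma cc_zero (K : ℝ) (t : ℕ) : cc K 0 t = 1 := by rw [cc]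

lemma cc_zero_fn (K : ℝ) : cc K 0 = fun _ => (1:ℝ) := funext (cc_zero K)

lemma cc_succ (K : ℝ) (i t : ℕ) : cc K (i+1) t = ∑ s ∈ range t, gg K (i+1) s := by
  rw [cc]
  apply Finset.sum_congr rfl
  intro s _
  simp only [gg, if_neg (Nat.succ_ne_zero i), Nat.succ_sub_one]

lemma cc_at_zero (K : ℝ) (i : ℕ) : cc K i 0 = if i = 0 then 1 else 0 := by
  cases i with
  | zero => rw [cc_zero]; simp
  | succ j => rw [cc_succ]; simp

lemma cc_step (K : ℝ) (i t : ℕ) : cc K i (t+1) = cc K i t + gg K i t := by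
  cases i with
  | zero => simp [cc_zero, gg]
  | succ j => rw [cc_succ, cc_succ, Finset.sum_range_succ]

lemma dd_cc (K : ℝ) (i : ℕ) : dd (cc K i) = gg K i := by
  funext t
  simp only [dd, cc_step]
  ring

lemma dd_iter_cc_succ (K : ℝ) (i m : ℕ) : dd^[m+1] (cc K i) = dd^[m] (gg K i) := by
  rw [Function.iterate_succ_apply, dd_cc]

lemma gg_eq_sum (K : ℝ) (i t : ℕ) :
    gg K (i+1) t = ∑ m ∈ range (i+1),
      ((-1:ℝ)^m * (K+t+1)^m) * (-(2*(K+t)+1) * cc K (i-m) t) := by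
  simp only [gg, if_neg (Nat.succ_ne_zero i), Nat.succ_sub_one]
  rw [Finset.mul_sum]
  apply Finset.sum_congr rfl
  intro m _
  ring

lemma hasDeg_ell (K : ℝ) : HasDeg (fun t : ℕ => -(2*(K+t)+1)) 1 := by
  have h := hasDeg_linear (-(2*K+1)) (-2)
  have e : (fun t : ℕ => -(2*K+1) + (-2) * t) = (fun t : ℕ => -(2*(K+t)+1)) := by
    funext t; ring
  rwa [e] at h

lemma hasDeg_pow1 (K : ℝ) (m : ℕ) : HasDeg (fun t : ℕ => ((-1:ℝ)^m * (K+t+1)^m)) m := by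
  have h := (hasDeg_linear_pow (K+1) 1 m).smul ((-1:ℝ)^m)
  have e : (fun t : ℕ => (-1:ℝ)^m * ((K+1) + 1*t)^m)
      = fun t : ℕ => ((-1:ℝ)^m * (K+t+1)^m) := by
    funext t; ring_nf
  rwa [e] at h

/-- degree bound for `cc`. -/
lemma hasDeg_cc (K : ℝ) : ∀ i, HasDeg (cc K i) (2*i) := by
  intro i
  induction i using Nat.strong_induction_on with
  | _ i IH =>
    cases i with
    | zero =>
        rw [Nat.mul_zero, cc_zero_fn]
        exact hasDeg_const 1
    | succ j =>
      -- first: gg (j+1) has degree ≤ 2j+1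
      have hgg : HasDeg (gg K (j+1)) (2*j+1) := by
        have hsum : HasDeg (fun t => ∑ m ∈ range (j+1),
            ((-1:ℝ)^m * (K+t+1)^m) * (-(2*(K+t)+1) * cc K (j-m) t)) (2*j+1) := by
          apply HasDeg.sum
          intro m hm
          have hm' : m ≤ j := by simpa using Nat.lt_succ_iff.mp (Finset.mem_range.mp hm)
          have h1 : HasDeg (fun t => -(2*(K+t)+1) * cc K (j-m) t) (1 + 2*(j-m)) :=
            (hasDeg_ell K).mul (IH (j-m) (by omega))
          have h2 := (hasDeg_pow1 K m).mul h1
          exact h2.mono (by omega)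
        have e : (fun t => ∑ m ∈ range (j+1),
            ((-1:ℝ)^m * (K+t+1)^m) * (-(2*(K+t)+1) * cc K (j-m) t)) = gg K (j+1) := by
          funext t; rw [gg_eq_sum]
        rwa [e] at hsum
      intro t
      have : (2*(j+1)+1) = (2*j+2)+1 := by ring
      rw [this, dd_iter_cc_succ]
      exact hgg.kill (by omega) t

lemma hasDeg_gg (K : ℝ) (i : ℕ) : HasDeg (gg K (i+1)) (2*i+1) := by
  have hsum : HasDeg (fun t => ∑ m ∈ range (i+1),
      ((-1:ℝ)^m * (K+t+1)^m) * (-(2*(K+t)+1) * cc K (i-m) t)) (2*i+1) := by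
    apply HasDeg.sum
    intro m hm
    have hm' : m ≤ i := by simpa using Nat.lt_succ_iff.mp (Finset.mem_range.mp hm)
    have h1 : HasDeg (fun t => -(2*(K+t)+1) * cc K (i-m) t) (1 + 2*(i-m)) :=
      (hasDeg_ell K).mul (hasDeg_cc K (i-m))
    exact ((hasDeg_pow1 K m).mul h1).mono (by omega)
  have e : (fun t => ∑ m ∈ range (i+1),
      ((-1:ℝ)^m * (K+t+1)^m) * (-(2*(K+t)+1) * cc K (i-m) t)) = gg K (i+1) := by
    funext t; rw [gg_eq_sum]
  rwa [e] at hsum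
/-! ### Section 4: top difference values -/

noncomputable def CCc (i : ℕ) : ℝ := (-1)^i * (Nat.factorial (2*i)) / (Nat.factorial i)

lemma CCc_succ (i : ℕ) : CCc (i+1) = -2 * (2*i+1) * CCc i := by
  unfold CCc
  have h1 : 2*(i+1) = (2*i+1)+1 := by ring
  rw [h1, Nat.factorial_succ, Nat.factorial_succ, Nat.factorial_succ]
  have h2 : (Nat.factorial i : ℝ) ≠ 0 := by positivity
  push_cast
  field_simp
  ring

lemma CCc_pos (i : ℕ) : (-1)^i * CCc i > 0 := by
  unfold CCc
  have h2 : (0:ℝ) < (Nat.factorial (2*i) : ℝ) / (Nat.factorial i) := by positivity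
  calc (-1:ℝ)^i * ((-1)^i * (Nat.factorial (2*i)) / (Nat.factorial i))
      = ((-1)^i)^2 * ((Nat.factorial (2*i)) / (Nat.factorial i)) := by ring
    _ > 0 := by rw [← pow_mul, pow_mul']; simp; positivity

lemma dd_ell (K : ℝ) (t : ℕ) : dd (fun s : ℕ => -(2*(K+s)+1)) t = -2 := by
  simp only [dd]
  push_cast
  ring

lemma ddcc_even (K : ℝ) : ∀ i t, dd^[2*i] (cc K i) t = CCc i := by
  intro i
  induction i with
  | zero =>
      intro t
      simp [cc_zero, CCc]
  | succ i IH =>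
      intro t
      have h2 : 2*(i+1) = (2*i+1)+1 := by ring
      rw [h2, dd_iter_cc_succ]
      have hg : gg K (i+1) = fun t => ∑ m ∈ range (i+1),
          (fun m t => ((-1:ℝ)^m * (K+t+1)^m) * (-(2*(K+t)+1) * cc K (i-m) t)) m t :=
        funext (gg_eq_sum K i)
      rw [hg, dd_iter_sum]
      simp only
      rw [Finset.sum_eq_single_of_mem 0 (Finset.mem_range.mpr (by omega))]
      · -- the m = 0 term
        have e0 : (fun s : ℕ => ((-1:ℝ)^0 * (K+s+1)^0) * (-(2*(K+s)+1) * cc K (i-0) s))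
            = fun s : ℕ => (-(2*(K+s)+1)) * cc K i s := by
          funext s; simp
        rw [e0, dd_iter_mul]
        rw [Finset.sum_eq_single_of_mem 1 (Finset.mem_range.mpr (by omega))]
        · have hd1 : dd^[1] (fun s : ℕ => -(2*(K+s)+1)) t = -2 := by
            rw [Function.iterate_one]; exact dd_ell K t
          have hIH : dd^[2*i+1-1] (cc K i) (t+1) = CCc i := by
            have : 2*i+1-1 = 2*i := by omega
            rw [this]; exact IH (t+1)
          rw [hd1, hIH, CCc_succ, Nat.choose_one_right]
          push_cast
          ring
        · intro j hj hj1
          rcases Nat.eq_zero_or_pos j with rfl | hpos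
          · have h0 : dd^[2*i+1-0] (cc K i) (t+0) = 0 :=
              (hasDeg_cc K i).kill (by omega) (t+0)
            rw [h0, mul_zero]
          · have hj2 : 2 ≤ j := by omega
            have : dd^[j] (fun s : ℕ => -(2*(K+s)+1)) t = 0 :=
              (hasDeg_ell K).kill (by omega) t
            rw [this]
            ring
      · intro m hm hm0
        have hm' : m ≤ i := by simpa using Nat.lt_succ_iff.mp (Finset.mem_range.mp hm)
        have h1 : HasDeg (fun s => -(2*(K+s)+1) * cc K (i-m) s) (1 + 2*(i-m)) :=
          (hasDeg_ell K).mul (hasDeg_cc K (i-m))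
        have h2' : HasDeg (fun s => ((-1:ℝ)^m * (K+s+1)^m) * (-(2*(K+s)+1) * cc K (i-m) s))
            (m + (1 + 2*(i-m))) := (hasDeg_pow1 K m).mul h1
        exact h2'.kill (by omega) t
/-! ### Section 5: odd top difference value at 0 -/

noncomputable def VVc (K : ℝ) (i : ℕ) : ℝ :=
  (-1)^(i+1) * (Nat.factorial (2*i+1)) / (Nat.factorial i) * (2*K + 2*i + 1)

lemma VVc_neg_pos (K : ℝ) (i : ℕ) (hK : 0 ≤ K) : (-1)^i * (- VVc K i) > 0 := by
  unfold VVc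
  have h1 : (0:ℝ) < (Nat.factorial (2*i+1) : ℝ) / (Nat.factorial i) := by positivity
  have h2 : (0:ℝ) < 2*K + 2*i + 1 := by positivity
  have e : (-1:ℝ)^i * (-((-1)^(i+1) * (Nat.factorial (2*i+1)) / (Nat.factorial i) * (2*K + 2*i + 1)))
      = ((-1)^i*(-1)^i) * ((Nat.factorial (2*i+1) : ℝ) / (Nat.factorial i) * (2*K + 2*i + 1)) := by
    rw [pow_succ]; ring
  have hsq : ((-1:ℝ))^i * (-1)^i = 1 := by
    rw [← pow_add]
    exact Even.neg_one_pow ⟨i, rfl⟩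
  rw [e, hsq, one_mul]
  positivity

lemma VVc_succ_eq (K : ℝ) (i : ℕ) :
    VVc K (i+1) = -(2*K+1)*CCc (i+1) + (2*(i:ℝ)+2)*(-2)*(VVc K i + CCc (i+1))
      + (((i:ℝ)+1)*(2*i+1))*4*CCc i := by
  unfold VVc CCc
  have e1 : 2*(i+1)+1 = (2*i+1)+1+1 := by ring
  have e2 : 2*(i+1) = (2*i+1)+1 := by ring
  rw [e1, e2, Nat.factorial_succ ((2*i+1)+1), Nat.factorial_succ (2*i+1),
      Nat.factorial_succ (2*i), Nat.factorial_succ i]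
  have h2 : (Nat.factorial i : ℝ) ≠ 0 := by positivity
  have h3 : (Nat.factorial (2*i) : ℝ) ≠ 0 := by positivity
  push_cast
  field_simp
  ring

lemma hasDeg_Q (K : ℝ) : HasDeg (fun t : ℕ => (2*(K+t)+1)*(K+t+1)) 2 := by
  have h1 := hasDeg_linear (2*K+1) 2
  have h2 := hasDeg_linear (K+1) 1
  have e1 : (fun t : ℕ => (2*K+1) + 2*t) = fun t : ℕ => 2*(K+t)+1 := by funext t; ring
  have e2 : (fun t : ℕ => (K+1) + 1*t) = fun t : ℕ => K+t+1 := by funext t; ring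
  rw [e1] at h1; rw [e2] at h2
  exact h1.mul h2

lemma dd2_Q (K : ℝ) (t : ℕ) : dd^[2] (fun s : ℕ => (2*(K+s)+1)*(K+s+1)) t = 4 := by
  have e : dd^[2] (fun s : ℕ => (2*(K+s)+1)*(K+s+1))
      = dd (dd^[1] (fun s : ℕ => (2*(K+s)+1)*(K+s+1))) := dd_iter_succ _ 1
  rw [e, Function.iterate_one]
  simp only [dd]
  push_cast
  ring

lemma choose_two_cast (i : ℕ) : (((2*i+2).choose 2 : ℕ) : ℝ) = ((i:ℝ)+1)*(2*i+1) := by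
  have h : (2*i+2).choose 2 = (i+1)*(2*i+1) := by
    rw [Nat.choose_two_right]
    have e0 : 2*i+2-1 = 2*i+1 := by omega
    rw [e0]
    have e : (2*i+2)*(2*i+1) = 2*((i+1)*(2*i+1)) := by ring
    rw [e, Nat.mul_div_cancel_left _ (by norm_num)]
  rw [h]; push_cast; ring

lemma ddcc_odd (K : ℝ) : ∀ i, dd^[2*i+1] (cc K (i+1)) 0 = VVc K i := by
  intro i
  induction i with
  | zero =>
      rw [Function.iterate_one, dd_cc]
      simp [gg, cc_zero, VVc]
  | succ i IH =>
      have h2 : 2*(i+1)+1 = (2*(i+1))+1 := by ring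
      rw [h2, dd_iter_cc_succ]
      have hg : gg K (i+2) = fun t => ∑ m ∈ range (i+2),
          (fun m t => ((-1:ℝ)^m * (K+t+1)^m) * (-(2*(K+t)+1) * cc K (i+1-m) t)) m t :=
        funext (gg_eq_sum K (i+1))
      rw [hg, dd_iter_sum]
      simp only
      rw [Finset.sum_range_succ' _ (i+1), Finset.sum_range_succ' _ i]
      -- the m ≥ 2 terms vanish
      have hzero : ∑ m ∈ range i, dd^[2*(i+1)]
          (fun t : ℕ => ((-1:ℝ)^(m+1+1) * (K+t+1)^(m+1+1)) * (-(2*(K+t)+1) * cc K (i+1-(m+1+1)) t)) 0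
          = 0 := by
        apply Finset.sum_eq_zero
        intro m hm
        have hm' : m < i := Finset.mem_range.mp hm
        have h1 : HasDeg (fun t => -(2*(K+t)+1) * cc K (i+1-(m+2)) t) (1 + 2*(i+1-(m+2))) :=
          (hasDeg_ell K).mul (hasDeg_cc K _)
        have h2' := (hasDeg_pow1 K (m+2)).mul h1
        exact h2'.kill (by omega) 0
      rw [hzero, zero_add]
      -- m = 1 term
      have hm1 : dd^[2*(i+1)]
          (fun t : ℕ => ((-1:ℝ)^(0+1) * (K+t+1)^(0+1)) * (-(2*(K+t)+1) * cc K (i+1-(0+1)) t)) 0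
          = (((i:ℝ)+1)*(2*i+1))*4*CCc i := by
        have e : (fun t : ℕ => ((-1:ℝ)^(0+1) * (K+t+1)^(0+1)) * (-(2*(K+t)+1) * cc K (i+1-(0+1)) t))
            = fun t : ℕ => ((2*(K+t)+1)*(K+t+1)) * cc K i t := by
          funext t
          have : i+1-(0+1) = i := by omega
          rw [this]
          ring
        rw [e, dd_iter_mul]
        rw [Finset.sum_eq_single_of_mem 2 (Finset.mem_range.mpr (by omega))]
        · have hq := dd2_Q K 0
          have hcc : dd^[2*(i+1)-2] (cc K i) (0+2) = CCc i := by
            have : 2*(i+1)-2 = 2*i := by omega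
            rw [this]; exact ddcc_even K i (0+2)
          rw [hq, hcc]
          rw [show (2*(i+1)) = 2*i+2 by ring, choose_two_cast]
        · intro j hj hj2
          rcases Nat.lt_or_ge j 2 with h | h
          · -- j = 0 or 1 : cc-factor dies
            have : dd^[2*(i+1)-j] (cc K i) (0+j) = 0 :=
              (hasDeg_cc K i).kill (by omega) (0+j)
            rw [this, mul_zero]
          · have h3 : 2 < j := by omega
            have : dd^[j] (fun s : ℕ => (2*(K+s)+1)*(K+s+1)) 0 =
              0 := (hasDeg_Q K).kill (by omega) 0
            rw [this, mul_zero, zero_mul]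
      rw [hm1]
      -- m = 0 term
      have hm0 : dd^[2*(i+1)]
          (fun t : ℕ => ((-1:ℝ)^0 * (K+t+1)^0) * (-(2*(K+t)+1) * cc K (i+1-0) t)) 0
          = -(2*K+1)*CCc (i+1) + (2*(i:ℝ)+2)*(-2)*(VVc K i + CCc (i+1)) := by
        have e : (fun t : ℕ => ((-1:ℝ)^0 * (K+t+1)^0) * (-(2*(K+t)+1) * cc K (i+1-0) t))
            = fun t : ℕ => (-(2*(K+t)+1)) * cc K (i+1) t := by
          funext t; simp
        rw [e, dd_iter_mul]
        have hsplit : ∀ j ∈ range (2*(i+1)+1), j ≠ 0 ∧ j ≠ 1 →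
            ((2*(i+1)).choose j : ℝ) * dd^[j] (fun s : ℕ => -(2*(K+s)+1)) 0
              * dd^[2*(i+1)-j] (cc K (i+1)) (0+j) = 0 := by
          intro j _ hj01
          obtain ⟨hj0, hj1⟩ := hj01
          have : dd^[j] (fun s : ℕ => -(2*(K+s)+1)) 0 = 0 :=
            (hasDeg_ell K).kill (by omega) 0
          rw [this, mul_zero, zero_mul]
        rw [Finset.sum_eq_add_of_mem 0 1 (Finset.mem_range.mpr (by omega))
              (Finset.mem_range.mpr (by omega)) (by omega) hsplit]
        have ha : dd^[0] (fun s : ℕ => -(2*(K+s)+1)) 0 = -(2*K+1) := by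
          simp
        have hb : dd^[2*(i+1)-0] (cc K (i+1)) (0+0) = CCc (i+1) := by
          simpa using ddcc_even K (i+1) 0
        have hc : dd^[1] (fun s : ℕ => -(2*(K+s)+1)) 0 = -2 := by
          rw [Function.iterate_one]; exact dd_ell K 0
        have hd : dd^[2*(i+1)-1] (cc K (i+1)) (0+1) = VVc K i + CCc (i+1) := by
          have e1 : 2*(i+1)-1 = 2*i+1 := by omega
          rw [e1]
          have hsh := dd_iter_shift (cc K (i+1)) (2*i+1) 0
          rw [hsh, IH]
          have e3 : 2*i+1+1 = 2*(i+1) := by omega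
          rw [e3, ddcc_even K (i+1) 0]
        rw [ha, hb, hc, hd, Nat.choose_zero_right, Nat.choose_one_right]
        push_cast
        ring
      rw [hm0, VVc_succ_eq]
      ring
/-! ### Section 6: the expansion limit -/

noncomputable def Rts (K : ℝ) (J t : ℕ) : ℝ :=
  ∑ m ∈ range J, (2*(K+t)+1) * (-1:ℝ)^(m+1) * ((K+t)+1)^(m+1) * cc K (J-1-m) t

lemma gg_alpha (K : ℝ) (J t : ℕ) :
    gg K (J+1) t = -Rts K J t - (2*(K+t)+1) * cc K J t := by
  rw [gg_eq_sum, Finset.sum_range_succ' _ J]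
  unfold Rts
  have e1 : ∀ k ∈ range J, ((-1:ℝ)^(k+1) * (K+(t:ℝ)+1)^(k+1)) * (-(2*(K+t)+1) * cc K (J-(k+1)) t)
      = -((2*(K+(t:ℝ))+1) * (-1:ℝ)^(k+1) * ((K+t)+1)^(k+1) * cc K (J-1-k) t) := by
    intro k _
    rw [show J-(k+1) = J-1-k by omega]
    ring
  rw [Finset.sum_congr rfl e1, Finset.sum_neg_distrib]
  simp
  ring

lemma Rts_beta (K : ℝ) (J t : ℕ) :
    Rts K (J+1) t = -((K+t)+1) * (Rts K J t + (2*(K+t)+1) * cc K J t) := by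
  unfold Rts
  rw [Finset.sum_range_succ' _ J]
  have e1 : ∀ k ∈ range J,
      (2*(K+(t:ℝ))+1) * (-1:ℝ)^(k+1+1) * ((K+t)+1)^(k+1+1) * cc K (J+1-1-(k+1)) t
      = -((K+(t:ℝ))+1) * ((2*(K+t)+1) * (-1:ℝ)^(k+1) * ((K+t)+1)^(k+1) * cc K (J-1-k) t) := by
    intro k _
    rw [show J+1-1-(k+1) = J-1-k by omega]
    ring
  rw [Finset.sum_congr rfl e1]
  rw [show J+1-1-0 = J by omega]
  have e3 : -((K+(t:ℝ))+1) * (∑ m ∈ range J,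
        (2*(K+(t:ℝ))+1) * (-1:ℝ)^(m+1) * ((K+t)+1)^(m+1) * cc K (J-1-m) t
        + (2*(K+t)+1) * cc K J t)
      = ∑ m ∈ range J, -((K+(t:ℝ))+1) *
          ((2*(K+(t:ℝ))+1) * (-1:ℝ)^(m+1) * ((K+t)+1)^(m+1) * cc K (J-1-m) t)
        + (-((K+(t:ℝ))+1) * ((2*(K+t)+1) * cc K J t)) := by
    rw [mul_add, Finset.mul_sum]
  rw [e3]
  congr 1
  ring

lemma key_ident (K : ℝ) (t : ℕ) (x : ℝ) (hx : x + ((K:ℝ)+t) + 1 ≠ 0) (hx0 : x ≠ 0) :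
    ∀ J : ℕ,
    x^J * ((∑ i ∈ range J, cc K i t / x^i) * (1 - (2*(K+t)+1)/(x+(K+t)+1))
        - ∑ i ∈ range J, cc K i (t+1) / x^i)
    = gg K J t - Rts K J t / (x+(K+t)+1) := by
  intro J
  induction J with
  | zero => simp [gg, Rts]
  | succ J IH =>
      have hxJ : x^J ≠ 0 := pow_ne_zero _ hx0
      have h1 : x^(J+1) * ((∑ i ∈ range (J+1), cc K i t / x^i) * (1 - (2*(K+t)+1)/(x+(K+t)+1))
            - ∑ i ∈ range (J+1), cc K i (t+1) / x^i)
          = x * (x^J * ((∑ i ∈ range J, cc K i t / x^i) * (1 - (2*(K+t)+1)/(x+(K+t)+1))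
            - ∑ i ∈ range J, cc K i (t+1) / x^i))
            + x * (cc K J t * (1 - (2*(K+t)+1)/(x+(K+t)+1)) - (cc K J t + gg K J t)) := by
        rw [Finset.sum_range_succ, Finset.sum_range_succ, cc_step]
        field_simp
        ring
      rw [h1, IH, gg_alpha, Rts_beta]
      field_simp
      ring
/-! ### Section 7: the binomial ratio and its expansion -/

noncomputable def rho (k : ℤ) (n : ℕ) (t : ℕ) : ℝ :=
  (((2*n).choose ((n:ℤ) - k - t).toNat : ℕ) : ℝ) / (((2*n).choose ((n:ℤ) - k).toNat : ℕ) : ℝ)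

lemma rho_self (k : ℤ) (n : ℕ) (h : k.natAbs ≤ n) : rho k n 0 = 1 := by
  unfold rho
  have hc : ((n:ℤ) - k - (0:ℕ)) = (n:ℤ) - k := by push_cast; ring
  rw [hc]
  apply div_self
  have hle : ((n:ℤ) - k).toNat ≤ 2*n := by omega
  have := Nat.choose_pos hle
  positivity

lemma rho_rec (k : ℤ) (t : ℕ) (n : ℕ) (hn : k.natAbs + t + 1 ≤ n) :
    rho k n (t+1) = rho k n t * (((n:ℝ) - k - t)/((n:ℝ) + k + t + 1)) := by
  have hk1 : (0:ℤ) ≤ (n:ℤ) - k - ((t:ℕ):ℤ) - 1 := by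
    have h1 : ((k.natAbs + t + 1 : ℕ) : ℤ) ≤ (n:ℤ) := Int.ofNat_le.mpr hn
    push_cast at h1
    omega
  set s : ℕ := ((n:ℤ) - k - ((t+1:ℕ):ℤ)).toNat with hs
  have hs1 : ((n:ℤ) - k - (t:ℕ)).toNat = s + 1 := by
    rw [hs]; push_cast; omega
  have hscast : (s:ℝ) = (n:ℝ) - k - t - 1 := by
    have : (s:ℤ) = (n:ℤ) - k - ((t:ℕ):ℤ) - 1 := by rw [hs]; push_cast; omega
    exact_mod_cast congrArg (Int.cast : ℤ → ℝ) this
  have hsle : s + 1 ≤ 2*n := by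
    have h1 : ((k.natAbs + t + 1 : ℕ) : ℤ) ≤ (n:ℤ) := Int.ofNat_le.mpr hn
    push_cast at h1
    omega
  have key : (((2*n).choose (s+1) : ℕ):ℝ) * ((s:ℝ)+1)
      = (((2*n).choose s : ℕ):ℝ) * ((n:ℝ)+k+t+1) := by
    have h0 := Nat.choose_succ_right_eq (2*n) s
    have h1 : (((2*n).choose (s+1) * (s+1) : ℕ) : ℝ) = (((2*n).choose s * (2*n - s) : ℕ) : ℝ) := by
      exact_mod_cast congrArg (Nat.cast : ℕ → ℝ) h0
    push_cast [Nat.cast_sub (by omega : s ≤ 2*n)] at h1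
    rw [h1]
    congr 1
    rw [hscast]; ring
  have hpos : (0:ℝ) < (n:ℝ)+k+t+1 := by
    have h1 : (s:ℝ) + 1 ≤ 2*n := by exact_mod_cast hsle
    rw [hscast] at h1
    linarith
  unfold rho
  rw [hs1]
  rw [show ((n:ℤ) - k - ((t+1:ℕ):ℤ)) = (n:ℤ) - k - (t:ℕ) - 1 by push_cast; ring]
  rw [show ((n:ℤ) - k - ((t:ℕ):ℤ) - 1).toNat = s by rw [hs]; push_cast; omega]
  rw [div_mul_div_comm]
  rw [show ((n:ℝ) - k - t) = (s:ℝ) + 1 by rw [hscast]; ring]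
  rw [show (((2*n).choose (s+1) : ℕ):ℝ) * ((s:ℝ)+1)
      = (((2*n).choose s : ℕ):ℝ) * ((n:ℝ)+k+t+1) from key]
  exact (mul_div_mul_right _ _ (ne_of_gt hpos)).symm

lemma tendsto_inv_shift (b : ℝ) : Filter.Tendsto (fun n : ℕ => (((n:ℝ)+b))⁻¹) Filter.atTop (nhds 0) :=
  (Filter.tendsto_atTop_add_const_right Filter.atTop b tendsto_natCast_atTop_atTop).inv_tendsto_atTop

lemma limW (k : ℤ) (J : ℕ) : ∀ t : ℕ,
    Filter.Tendsto (fun n : ℕ => (n:ℝ)^J * (rho k n t - ∑ i ∈ range J, cc (k:ℝ) i t / (n:ℝ)^i))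
      Filter.atTop (nhds (cc (k:ℝ) J t)) := by
  intro t
  induction t with
  | zero =>
      have hsum : ∀ n : ℕ, 1 ≤ n → ∑ i ∈ range J, cc (k:ℝ) i 0 / (n:ℝ)^i
          = if J = 0 then 0 else 1 := by
        intro n hn
        cases J with
        | zero => simp
        | succ J' =>
            rw [Finset.sum_eq_single_of_mem 0 (Finset.mem_range.mpr (by omega))]
            · simp [cc_at_zero]
            · intro i _ hi
              rw [cc_at_zero, if_neg hi, zero_div]
      have hev : ∀ᶠ n : ℕ in Filter.atTop,
          (n:ℝ)^J * (rho k n 0 - ∑ i ∈ range J, cc (k:ℝ) i 0 / (n:ℝ)^i)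
          = cc (k:ℝ) J 0 := by
        filter_upwards [Filter.eventually_ge_atTop (max 1 k.natAbs)] with n hn
        have h1 : 1 ≤ n := le_trans (le_max_left _ _) hn
        have h2 : k.natAbs ≤ n := le_trans (le_max_right _ _) hn
        rw [rho_self k n h2, hsum n h1, cc_at_zero]
        cases J with
        | zero => simp
        | succ J' => simp
      exact Filter.Tendsto.congr' (by filter_upwards [hev] with n h using h.symm)
        tendsto_const_nhds
  | succ t IH =>
      have hstep : ∀ᶠ n : ℕ in Filter.atTop,
          (n:ℝ)^J * (rho k n (t+1) - ∑ i ∈ range J, cc (k:ℝ) i (t+1) / (n:ℝ)^i)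
          = (1 - (2*((k:ℝ)+t)+1)/((n:ℝ)+((k:ℝ)+t)+1))
              * ((n:ℝ)^J * (rho k n t - ∑ i ∈ range J, cc (k:ℝ) i t / (n:ℝ)^i))
            + (gg (k:ℝ) J t - Rts (k:ℝ) J t / ((n:ℝ)+((k:ℝ)+t)+1)) := by
        filter_upwards [Filter.eventually_ge_atTop (k.natAbs + t + 1)] with n hn
        have hrec := rho_rec k t n hn
        have hx : (n:ℝ) + ((k:ℝ)+t) + 1 ≠ 0 := by
          have h1 : ((k.natAbs + t + 1 : ℕ) : ℝ) ≤ (n:ℝ) := Nat.cast_le.mpr hn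
          have h2 : -(k:ℝ) ≤ |(k:ℝ)| := neg_le_abs _
          push_cast [Nat.cast_natAbs] at h1
          have : (0:ℝ) < (n:ℝ) + ((k:ℝ)+t) + 1 := by linarith
          exact ne_of_gt this
        have hx0 : (n:ℝ) ≠ 0 := by
          have : (1:ℕ) ≤ n := by omega
          positivity
        have hx'' : (n:ℝ) + k + t + 1 ≠ 0 := by
          rw [show (n:ℝ)+k+t+1 = (n:ℝ)+((k:ℝ)+t)+1 by ring]; exact hx
        have hw : ((n:ℝ) - k - t)/((n:ℝ) + k + t + 1)
            = 1 - (2*((k:ℝ)+t)+1)/((n:ℝ)+((k:ℝ)+t)+1) := by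
          field_simp
          ring
        have hki := key_ident (k:ℝ) t (n:ℝ) hx hx0 J
        rw [hrec, hw, ← hki]
        ring
      have hlim : Filter.Tendsto (fun n : ℕ =>
          (1 - (2*((k:ℝ)+t)+1)/((n:ℝ)+((k:ℝ)+t)+1))
              * ((n:ℝ)^J * (rho k n t - ∑ i ∈ range J, cc (k:ℝ) i t / (n:ℝ)^i))
            + (gg (k:ℝ) J t - Rts (k:ℝ) J t / ((n:ℝ)+((k:ℝ)+t)+1)))
          Filter.atTop (nhds ((1 - 0) * cc (k:ℝ) J t + (gg (k:ℝ) J t - 0))) := by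
        apply Filter.Tendsto.add
        · apply Filter.Tendsto.mul _ IH
          apply Filter.Tendsto.sub tendsto_const_nhds
          have h := (tendsto_inv_shift ((k:ℝ)+t+1)).const_mul (2*((k:ℝ)+t)+1)
          rw [mul_zero] at h
          apply h.congr
          intro n
          rw [div_eq_mul_inv]
          ring_nf
        · apply Filter.Tendsto.sub tendsto_const_nhds
          have h := (tendsto_inv_shift ((k:ℝ)+t+1)).const_mul (Rts (k:ℝ) J t)
          rw [mul_zero] at h
          apply h.congr
          intro n
          rw [div_eq_mul_inv]
          ring_nf
      have hval : (1 - 0) * cc (k:ℝ) J t + (gg (k:ℝ) J t - 0) = cc (k:ℝ) J (t+1) := by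
        rw [cc_step]; ring
      rw [← hval]
      exact Filter.Tendsto.congr' (by filter_upwards [hstep] with n h using h.symm) hlim
/-! ### Section 8: sum formula and limit of differences -/

lemma dd_iter_sum_formula (f : ℕ → ℝ) (m y : ℕ) :
    dd^[m] f y = ∑ ℓ ∈ range (m+1), ((-1:ℝ)^(m-ℓ) * (m.choose ℓ)) * f (y+ℓ) := by
  have h : dd = fwdDiff (1:ℕ) := rfl
  rw [h, fwdDiff_iter_eq_sum_shift]
  apply Finset.sum_congr rfl
  intro ℓ _
  have : y + ℓ • (1:ℕ) = y + ℓ := by simp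
  rw [this, zsmul_eq_mul]
  push_cast
  ring

lemma limDD (k : ℤ) (a J : ℕ) (hiJ : ∀ i, i < J → 2*i < a) :
    Filter.Tendsto (fun n : ℕ => (n:ℝ)^J * dd^[a] (rho k n) 0)
      Filter.atTop (nhds (dd^[a] (cc (k:ℝ) J) 0)) := by
  have hEq : ∀ n : ℕ, (n:ℝ)^J * dd^[a] (rho k n) 0
      = ∑ ℓ ∈ range (a+1), ((-1:ℝ)^(a-ℓ) * (a.choose ℓ)) *
          ((n:ℝ)^J * (rho k n (0+ℓ) - ∑ i ∈ range J, cc (k:ℝ) i (0+ℓ) / (n:ℝ)^i)) := by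
    intro n
    rw [dd_iter_sum_formula]
    have expand : ∀ ℓ ∈ range (a+1),
        ((-1:ℝ)^(a-ℓ) * (a.choose ℓ)) *
          ((n:ℝ)^J * (rho k n (0+ℓ) - ∑ i ∈ range J, cc (k:ℝ) i (0+ℓ) / (n:ℝ)^i))
        = ((-1:ℝ)^(a-ℓ) * (a.choose ℓ)) * ((n:ℝ)^J * rho k n (0+ℓ))
          - ∑ i ∈ range J, ((n:ℝ)^J / (n:ℝ)^i)
              * (((-1:ℝ)^(a-ℓ) * (a.choose ℓ)) * cc (k:ℝ) i (0+ℓ)) := by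
      intro ℓ _
      have e1 : (n:ℝ)^J * (rho k n (0+ℓ) - ∑ i ∈ range J, cc (k:ℝ) i (0+ℓ) / (n:ℝ)^i)
          = (n:ℝ)^J * rho k n (0+ℓ)
            - ∑ i ∈ range J, (n:ℝ)^J/(n:ℝ)^i * cc (k:ℝ) i (0+ℓ) := by
        rw [mul_sub, Finset.mul_sum]
        congr 1
        apply Finset.sum_congr rfl
        intro i _
        rw [div_mul_eq_mul_div, mul_div_assoc]
      rw [e1, mul_sub, Finset.mul_sum]
      congr 1
      apply Finset.sum_congr rfl
      intro i _
      ring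
    rw [Finset.sum_congr rfl expand, Finset.sum_sub_distrib]
    have hz : ∑ ℓ ∈ range (a+1), ∑ i ∈ range J, ((n:ℝ)^J / (n:ℝ)^i)
              * (((-1:ℝ)^(a-ℓ) * (a.choose ℓ)) * cc (k:ℝ) i (0+ℓ)) = 0 := by
      rw [Finset.sum_comm]
      apply Finset.sum_eq_zero
      intro i hi
      rw [← Finset.mul_sum]
      have h0 : ∑ ℓ ∈ range (a+1), ((-1:ℝ)^(a-ℓ) * (a.choose ℓ)) * cc (k:ℝ) i (0+ℓ) = 0 := by
        rw [← dd_iter_sum_formula]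
        exact (hasDeg_cc _ i).kill (hiJ i (Finset.mem_range.mp hi)) 0
      rw [h0, mul_zero]
    rw [hz, sub_zero, Finset.mul_sum]
    apply Finset.sum_congr rfl
    intro ℓ _
    ring
  have hlim : Filter.Tendsto (fun n : ℕ => ∑ ℓ ∈ range (a+1), ((-1:ℝ)^(a-ℓ) * (a.choose ℓ)) *
      ((n:ℝ)^J * (rho k n (0+ℓ) - ∑ i ∈ range J, cc (k:ℝ) i (0+ℓ) / (n:ℝ)^i)))
      Filter.atTop (nhds (∑ ℓ ∈ range (a+1), ((-1:ℝ)^(a-ℓ) * (a.choose ℓ)) * cc (k:ℝ) J (0+ℓ))) := by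
    apply tendsto_finset_sum
    intro ℓ _
    exact (limW k J (0+ℓ)).const_mul _
  rw [← dd_iter_sum_formula] at hlim
  exact (Filter.Tendsto.congr (fun n => (hEq n).symm)) hlim

/-! ### Section 9: central binomial asymptotics -/

lemma tendsto_two_mul_atTop : Filter.Tendsto (fun n : ℕ => 2*n) Filter.atTop Filter.atTop := by
  apply Filter.tendsto_atTop_atTop.mpr
  intro b
  exact ⟨b, fun a ha => by omega⟩

lemma stirling_ratio (n : ℕ) (hn : 1 ≤ n) :
    Real.sqrt n * ((2*n).choose n : ℝ) / 4^n
      = Stirling.stirlingSeq (2*n) / (Stirling.stirlingSeq n)^2 := by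
  have hA : (((2*n).factorial : ℕ) : ℝ) = ((2*n).choose n : ℝ) * (n.factorial : ℝ) * (n.factorial : ℝ) := by
    have h0 := Nat.choose_mul_factorial_mul_factorial (show n ≤ 2*n by omega)
    rw [show 2*n - n = n by omega] at h0
    exact_mod_cast (congrArg (Nat.cast : ℕ → ℝ) h0).symm
  unfold Stirling.stirlingSeq
  rw [hA]
  have hnR : (0:ℝ) < (n:ℝ) := by exact_mod_cast hn
  have hx : (0:ℝ) < Real.sqrt (2*(n:ℝ)) := Real.sqrt_pos.mpr (by linarith)
  have hsq : Real.sqrt (2*(n:ℝ))^2 = 2*(n:ℝ) := Real.sq_sqrt (by linarith)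
  have h4 : Real.sqrt (2*((2*n:ℕ):ℝ)) = 2 * Real.sqrt (n:ℝ) := by
    push_cast
    rw [show 2*(2*(n:ℝ)) = 4 * (n:ℝ) by ring]
    rw [show (4:ℝ) * (n:ℝ) = (2:ℝ)^2 * (n:ℝ) by norm_num]
    rw [Real.sqrt_mul (by positivity), Real.sqrt_sq (by norm_num)]
  have hP : (0:ℝ) < ((n:ℝ)/Real.exp 1)^n := by positivity
  have hE : (((2*n:ℕ):ℝ)/Real.exp 1)^(2*n) = 4^n * (((n:ℝ)/Real.exp 1)^n)^2 := by
    push_cast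
    rw [show 2*(n:ℝ)/Real.exp 1 = 2*((n:ℝ)/Real.exp 1) by ring, mul_pow]
    rw [show (2:ℝ)^(2*n) = 4^n by rw [pow_mul]; norm_num]
    rw [← pow_mul, show n*2 = 2*n by ring]
  rw [h4, hE]
  have hB : (0:ℝ) < (n.factorial : ℝ) := by exact_mod_cast n.factorial_pos
  have hsn : (0:ℝ) < Real.sqrt (n:ℝ) := Real.sqrt_pos.mpr hnR
  field_simp
  ring_nf
  rw [Real.sq_sqrt (le_of_lt hnR), Real.sq_sqrt (by positivity)]
  ring
lemma central_tendsto :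
    Filter.Tendsto (fun n : ℕ => Real.sqrt n * ((2*n).choose n : ℝ) / 4^n)
      Filter.atTop (nhds ((Real.sqrt Real.pi)⁻¹)) := by
  have hs := Stirling.tendsto_stirlingSeq_sqrt_pi
  have hs2 : Filter.Tendsto (fun n : ℕ => Stirling.stirlingSeq (2*n))
      Filter.atTop (nhds (Real.sqrt Real.pi)) := hs.comp tendsto_two_mul_atTop
  have hpi : Real.sqrt Real.pi ≠ 0 := by
    have := Real.sqrt_pos.mpr Real.pi_pos
    linarith
  have hq : Filter.Tendsto (fun n : ℕ => Stirling.stirlingSeq (2*n) / (Stirling.stirlingSeq n)^2)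
      Filter.atTop (nhds (Real.sqrt Real.pi / (Real.sqrt Real.pi)^2)) := by
    apply hs2.div (hs.pow 2)
    positivity
  have hval : Real.sqrt Real.pi / (Real.sqrt Real.pi)^2 = (Real.sqrt Real.pi)⁻¹ := by
    rw [sq]
    field_simp
  rw [hval] at hq
  apply Filter.Tendsto.congr' _ hq
  filter_upwards [Filter.eventually_ge_atTop 1] with n hn
  exact (stirling_ratio n hn).symm

/-! ### Section 10: Afun basics -/

lemma afun_fwd (d : ℕ) : ∀ (a : ℕ) (k : ℤ),
    Afun d a k = (-1:ℝ)^a * (fwdDiff (1:ℤ))^[a] (Afun d 0) k := by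
  intro a
  induction a with
  | zero => intro k; simp
  | succ a IH =>
      intro k
      rw [show Afun d (a+1) k = Afun d a k - Afun d a (k+1) from rfl]
      rw [IH k, IH (k+1)]
      rw [Function.iterate_succ_apply' (fwdDiff (1:ℤ)) a]
      rw [show (fwdDiff (1:ℤ)) ((fwdDiff (1:ℤ))^[a] (Afun d 0)) k
          = (fwdDiff (1:ℤ))^[a] (Afun d 0) (k+1) - (fwdDiff (1:ℤ))^[a] (Afun d 0) k from rfl]
      rw [pow_succ]
      ring

lemma neg_one_pow_sub_eq (a ℓ : ℕ) (h : ℓ ≤ a) : (-1:ℝ)^a * (-1:ℝ)^(a-ℓ) = (-1:ℝ)^ℓ := by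
  rw [← pow_add]
  have h2 : a + (a - ℓ) = 2*(a-ℓ) + ℓ := by omega
  rw [h2, pow_add, pow_mul]
  norm_num

lemma afun_sum (d : ℕ) (a : ℕ) (k : ℤ) :
    Afun d a k = ∑ ℓ ∈ range (a+1), ((-1:ℝ)^ℓ * (a.choose ℓ)) * Afun d 0 (k+ℓ) := by
  rw [afun_fwd d a k, fwdDiff_iter_eq_sum_shift, Finset.mul_sum]
  apply Finset.sum_congr rfl
  intro ℓ hℓ
  have hℓa : ℓ ≤ a := by
    have := Finset.mem_range.mp hℓ; omega
  have hone : (-1:ℝ)^a * (-1:ℝ)^a = 1 := by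
    rw [← pow_add]; exact Even.neg_one_pow ⟨a, rfl⟩
  have h4 : (-1:ℝ)^(a-ℓ) = (-1:ℝ)^a * (-1:ℝ)^ℓ := by
    have h5 := neg_one_pow_sub_eq a ℓ hℓa
    calc (-1:ℝ)^(a-ℓ) = ((-1:ℝ)^a * (-1:ℝ)^a) * (-1:ℝ)^(a-ℓ) := by rw [hone]; ring
      _ = (-1:ℝ)^a * ((-1:ℝ)^a * (-1:ℝ)^(a-ℓ)) := by ring
      _ = (-1:ℝ)^a * (-1:ℝ)^ℓ := by rw [h5]
  rw [zsmul_eq_mul]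
  have hcast : ((((-1:ℤ)^(a-ℓ) * (a.choose ℓ) : ℤ)) : ℝ) = (-1:ℝ)^(a-ℓ) * ((a.choose ℓ):ℝ) := by
    push_cast; ring
  rw [hcast, h4, show k + ℓ • (1:ℤ) = k + ℓ by simp]
  calc (-1:ℝ)^a * (((-1:ℝ)^a * (-1:ℝ)^ℓ * ((a.choose ℓ):ℝ)) * Afun d 0 (k+ℓ))
      = ((-1:ℝ)^a * (-1:ℝ)^a) * ((-1:ℝ)^ℓ * ((a.choose ℓ):ℝ) * Afun d 0 (k+ℓ)) := by ring
    _ = (-1:ℝ)^ℓ * ((a.choose ℓ):ℝ) * Afun d 0 (k+ℓ) := by rw [hone]; ring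

lemma afun_zero_eval (n : ℕ) (m : ℤ) (hm : 0 ≤ (n:ℤ) - m) :
    Afun (2*n) 0 m = (((2*n).choose ((n:ℤ) - m).toNat : ℕ) : ℝ) / 4^n := by
  rw [show Afun (2*n) 0 m = chooseZ (2*n) (((2*n)/2 : ℕ) - m) / 2^(2*n) from rfl]
  rw [show ((2*n)/2 : ℕ) = n by omega]
  rw [chooseZ, if_pos hm]
  congr 1
  rw [pow_mul]
  norm_num

/-- Even `d` formula: `Afun (2n) a k` in terms of `rho`. -/
lemma afun_even (n : ℕ) (a : ℕ) (k : ℤ) (hn : k.natAbs + a + 1 ≤ n) :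
    Afun (2*n) a k = ((((2*n).choose ((n:ℤ) - k).toNat : ℕ)) : ℝ)/4^n
      * ((-1:ℝ)^a * dd^[a] (rho k n) 0) := by
  rw [afun_sum]
  have hc0 : (0:ℝ) < (((2*n).choose ((n:ℤ) - k).toNat : ℕ) : ℝ) := by
    have h1 : ((n:ℤ) - k).toNat ≤ 2*n := by omega
    exact_mod_cast Nat.choose_pos h1
  rw [dd_iter_sum_formula, Finset.mul_sum, Finset.mul_sum]
  apply Finset.sum_congr rfl
  intro ℓ hℓ
  have hℓa : ℓ ≤ a := by
    have := Finset.mem_range.mp hℓ; omega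
  have heval : Afun (2*n) 0 (k+ℓ) = (((2*n).choose ((n:ℤ) - k - ℓ).toNat : ℕ) : ℝ) / 4^n := by
    rw [show (n:ℤ) - k - ℓ = (n:ℤ) - (k + ℓ) by ring]
    apply afun_zero_eval
    omega
  rw [heval]
  rw [show rho k n (0+ℓ) = rho k n ℓ by norm_num]
  unfold rho
  rw [show (((n:ℤ) - k - ((ℓ:ℕ):ℤ))) = ((n:ℤ) - k - ℓ) by push_cast; ring]
  have hre : (-1:ℝ)^a * (-1:ℝ)^(a-ℓ) = (-1:ℝ)^ℓ := neg_one_pow_sub_eq a ℓ hℓa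
  have hc0' : (((2*n).choose ((n:ℤ) - k).toNat : ℕ) : ℝ) ≠ 0 := ne_of_gt hc0
  have hsplit : (((2*n).choose ((n:ℤ)-k-ℓ).toNat : ℕ):ℝ)/4^n
      = (((2*n).choose ((n:ℤ) - k).toNat : ℕ):ℝ)/4^n
        * ((((2*n).choose ((n:ℤ)-k-ℓ).toNat : ℕ):ℝ)/(((2*n).choose ((n:ℤ) - k).toNat : ℕ):ℝ)) := by
    field_simp
  rw [hsplit, ← hre]
  ring
/-! ### Section 10: odd/even reduction and global limits -/

lemma chooseZ_pascal (n : ℕ) (m : ℤ) :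
    chooseZ (2*n+1) m = chooseZ (2*n) m + chooseZ (2*n) (m-1) := by
  unfold chooseZ
  rcases lt_trichotomy m 0 with hm | hm | hm
  · rw [if_neg (by omega), if_neg (by omega), if_neg (by omega)]
    norm_num
  · subst hm
    rw [if_pos le_rfl, if_pos le_rfl, if_neg (by omega)]
    simp
  · rw [if_pos (by omega), if_pos (by omega), if_pos (by omega)]
    have hs : m.toNat = (m-1).toNat + 1 := by omega
    rw [hs, Nat.choose_succ_succ]
    push_cast
    ring

lemma afun_odd (n : ℕ) : ∀ (a : ℕ) (k : ℤ),
    Afun (2*n+1) a k = (Afun (2*n) a k + Afun (2*n) a (k+1))/2 := by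
  intro a
  induction a with
  | zero =>
      intro k
      rw [show Afun (2*n+1) 0 k = chooseZ (2*n+1) (((2*n+1)/2 : ℕ) - k) / 2^(2*n+1) from rfl]
      rw [show Afun (2*n) 0 k = chooseZ (2*n) (((2*n)/2 : ℕ) - k) / 2^(2*n) from rfl]
      rw [show Afun (2*n) 0 (k+1) = chooseZ (2*n) (((2*n)/2 : ℕ) - (k+1)) / 2^(2*n) from rfl]
      rw [show ((2*n+1)/2 : ℕ) = n by omega, show ((2*n)/2 : ℕ) = n by omega]
      rw [chooseZ_pascal n ((n:ℤ) - k)]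
      rw [show (n:ℤ) - k - 1 = (n:ℤ) - (k+1) by ring]
      rw [pow_succ]
      have h2 : ((2:ℝ))^(2*n) ≠ 0 := by positivity
      field_simp
      try ring
  | succ a IH =>
      intro k
      rw [show Afun (2*n+1) (a+1) k = Afun (2*n+1) a k - Afun (2*n+1) a (k+1) from rfl]
      rw [show Afun (2*n) (a+1) k = Afun (2*n) a k - Afun (2*n) a (k+1) from rfl]
      rw [show Afun (2*n) (a+1) (k+1) = Afun (2*n) a (k+1) - Afun (2*n) a (k+1+1) from rfl]
      rw [IH k, IH (k+1)]
      ring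

lemma ratio_tendsto (k : ℤ) :
    Filter.Tendsto (fun n : ℕ => (((2*n).choose ((n:ℤ)-k).toNat : ℕ):ℝ)
        / (((2*n).choose n : ℕ):ℝ)) Filter.atTop (nhds 1) := by
  have hW := limW 0 0 k.natAbs
  have hcc : cc ((0:ℤ):ℝ) 0 k.natAbs = 1 := cc_zero _ _
  rw [hcc] at hW
  apply Filter.Tendsto.congr' _ (by simpa using hW)
  filter_upwards [Filter.eventually_ge_atTop k.natAbs] with n hn
  have h1 : ((n:ℤ) - 0 - (k.natAbs:ℕ)).toNat = n - k.natAbs := by omega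
  have h2 : ((n:ℤ) - 0).toNat = n := by omega
  unfold rho
  rw [h1, h2]
  congr 2
  -- C(2n, (n-k).toNat) = C(2n, n - |k|)
  rcases le_or_gt 0 k with hk | hk
  · have : ((n:ℤ) - k).toNat = n - k.natAbs := by omega
    rw [this]
  · have h3 : ((n:ℤ) - k).toNat = n + k.natAbs := by omega
    rw [h3]
    have h4 : n + k.natAbs ≤ 2*n := by omega
    have h5 := Nat.choose_symm h4
    rw [show 2*n - (n + k.natAbs) = n - k.natAbs by omega] at h5
    exact h5

/-- the leading coefficient -/
noncomputable def lam (a : ℕ) (k : ℤ) : ℝ := dd^[a] (cc (k:ℝ) ((a+1)/2)) 0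

noncomputable def LEc (a : ℕ) (k : ℤ) : ℝ :=
  (2:ℝ)^((1/2:ℝ)+(((a+1)/2 : ℕ):ℝ)) * (Real.sqrt Real.pi)⁻¹ * ((-1:ℝ)^a * lam a k)

lemma rpow_split (n : ℕ) (hn : 1 ≤ n) (J : ℕ) :
    ((2*n : ℕ):ℝ)^((1/2:ℝ)+(J:ℝ))
      = (2:ℝ)^((1/2:ℝ)+(J:ℝ)) * (Real.sqrt n * (n:ℝ)^J) := by
  have hn0 : (0:ℝ) < (n:ℝ) := by exact_mod_cast hn
  have h1 : ((2*n : ℕ):ℝ) = 2 * (n:ℝ) := by push_cast; ring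
  rw [h1, Real.mul_rpow (by norm_num) (le_of_lt hn0)]
  congr 1
  rw [Real.rpow_add hn0, Real.rpow_natCast]
  congr 1
  rw [← Real.sqrt_eq_rpow]

lemma even_tendsto (a : ℕ) (k : ℤ) :
    Filter.Tendsto (fun n : ℕ => ((2*n : ℕ):ℝ)^((1/2:ℝ)+(((a+1)/2 : ℕ):ℝ)) * Afun (2*n) a k)
      Filter.atTop (nhds (LEc a k)) := by
  set J := (a+1)/2 with hJ
  have hiJ : ∀ i, i < J → 2*i < a := by intro i hi; omega
  have hDD := limDD k a J hiJ
  have hcentral := central_tendsto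
  have hratio := ratio_tendsto k
  have hprod : Filter.Tendsto (fun n : ℕ =>
      ((2:ℝ)^((1/2:ℝ)+(J:ℝ)) * (-1:ℝ)^a) *
      ((Real.sqrt n * ((2*n).choose n : ℝ) / 4^n)
        * ((((2*n).choose ((n:ℤ)-k).toNat : ℕ):ℝ) / (((2*n).choose n : ℕ):ℝ))
        * ((n:ℝ)^J * dd^[a] (rho k n) 0)))
      Filter.atTop (nhds (((2:ℝ)^((1/2:ℝ)+(J:ℝ)) * (-1:ℝ)^a) *
        ((Real.sqrt Real.pi)⁻¹ * 1 * (dd^[a] (cc (k:ℝ) J) 0)))) :=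
    ((hcentral.mul hratio).mul hDD).const_mul _
  have hval : ((2:ℝ)^((1/2:ℝ)+(J:ℝ)) * (-1:ℝ)^a) *
        ((Real.sqrt Real.pi)⁻¹ * 1 * (dd^[a] (cc (k:ℝ) J) 0)) = LEc a k := by
    unfold LEc lam
    rw [← hJ]
    ring
  rw [hval] at hprod
  apply Filter.Tendsto.congr' _ hprod
  filter_upwards [Filter.eventually_ge_atTop (k.natAbs + a + 1)] with n hn
  have hn1 : 1 ≤ n := by omega
  have hAf := afun_even n a k hn
  rw [hAf, rpow_split n hn1 J]
  have hcn : (0:ℝ) < (((2*n).choose n : ℕ):ℝ) := by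
    exact_mod_cast Nat.choose_pos (show n ≤ 2*n by omega)
  field_simp

lemma odd_tendsto (a : ℕ) (k : ℤ) :
    Filter.Tendsto (fun n : ℕ => ((2*n+1 : ℕ):ℝ)^((1/2:ℝ)+(((a+1)/2 : ℕ):ℝ)) * Afun (2*n+1) a k)
      Filter.atTop (nhds ((LEc a k + LEc a (k+1))/2)) := by
  set J := (a+1)/2 with hJ
  set x : ℝ := (1/2:ℝ)+(J:ℝ) with hx
  have hE1 := even_tendsto a k
  have hE2 := even_tendsto a (k+1)
  -- the rpow ratio tends to 1
  have hbase : Filter.Tendsto (fun n : ℕ => ((2*n+1 : ℕ):ℝ) / ((2*n : ℕ):ℝ))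
      Filter.atTop (nhds 1) := by
    have h0 : Filter.Tendsto (fun n : ℕ => ((2*(n:ℝ)))⁻¹) Filter.atTop (nhds 0) := by
      have h1 : Filter.Tendsto (fun n : ℕ => 2*(n:ℝ)) Filter.atTop Filter.atTop :=
        (tendsto_natCast_atTop_atTop).const_mul_atTop (by norm_num)
      exact h1.inv_tendsto_atTop
    have h2 := h0.const_add (1:ℝ)
    rw [add_zero] at h2
    apply Filter.Tendsto.congr' _ h2
    filter_upwards [Filter.eventually_ge_atTop 1] with n hn
    have hn0 : (0:ℝ) < 2*(n:ℝ) := by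
      have : (1:ℝ) ≤ (n:ℝ) := by exact_mod_cast hn
      linarith
    push_cast
    field_simp
  have hqr : Filter.Tendsto (fun n : ℕ => (((2*n+1 : ℕ):ℝ) / ((2*n : ℕ):ℝ))^x)
      Filter.atTop (nhds 1) := by
    have hc : ContinuousAt (fun y : ℝ => y^x) 1 :=
      Real.continuousAt_rpow_const 1 x (Or.inl one_ne_zero)
    have := hc.tendsto.comp hbase
    simpa [Real.one_rpow, Function.comp_def] using this
  have hcomb : Filter.Tendsto (fun n : ℕ =>
      (((2*n+1 : ℕ):ℝ) / ((2*n : ℕ):ℝ))^x *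
        ((((2*n : ℕ):ℝ)^x * Afun (2*n) a k + ((2*n : ℕ):ℝ)^x * Afun (2*n) a (k+1))/2))
      Filter.atTop (nhds (1 * ((LEc a k + LEc a (k+1))/2))) :=
    hqr.mul ((hE1.add hE2).div_const 2)
  rw [one_mul] at hcomb
  apply Filter.Tendsto.congr' _ hcomb
  filter_upwards [Filter.eventually_ge_atTop 1] with n hn
  have h2n : (0:ℝ) < ((2*n : ℕ):ℝ) := by
    have : 1 ≤ 2*n := by omega
    exact_mod_cast this
  have h2n1 : (0:ℝ) ≤ ((2*n+1 : ℕ):ℝ) := by positivity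
  rw [afun_odd n a k]
  rw [Real.div_rpow h2n1 (le_of_lt h2n)]
  have hne : ((2*n : ℕ):ℝ)^x ≠ 0 := by
    exact ne_of_gt (Real.rpow_pos_of_pos h2n x)
  field_simp
/-! ### Section 11: signs and final assembly -/

lemma sign_lam (a : ℕ) (k : ℤ) (h : Even a ∨ 0 ≤ k) :
    0 < (-1:ℝ)^(a/2) * ((-1:ℝ)^a * lam a k) := by
  rcases Nat.even_or_odd a with ⟨b, hb⟩ | ⟨b, hb⟩
  · have hb' : a = 2*b := by omega
    have hJ : (a+1)/2 = b := by omega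
    have hhalf : a/2 = b := by omega
    unfold lam
    rw [hJ, hhalf, hb', ddcc_even (k:ℝ) b 0]
    have hev : (-1:ℝ)^(2*b) = 1 := by
      rw [pow_mul]; norm_num
    rw [hev, one_mul]
    exact CCc_pos b
  · have hk : 0 ≤ k := by
      rcases h with he | hk
      · exact absurd he (by simp [hb, parity_simps])
      · exact hk
    have hJ : (a+1)/2 = b+1 := by omega
    have hhalf : a/2 = b := by omega
    unfold lam
    rw [hJ, hhalf, show a = 2*b+1 from hb, ddcc_odd (k:ℝ) b]
    have hodd : (-1:ℝ)^(2*b+1) = -1 := by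
      rw [pow_succ, pow_mul]; norm_num
    rw [hodd]
    have hpos := VVc_neg_pos (k:ℝ) b (by exact_mod_cast hk)
    have e : (-1:ℝ)^b * (-1 * VVc (k:ℝ) b) = (-1:ℝ)^b * (-(VVc (k:ℝ) b)) := by ring
    rw [e]
    exact hpos

lemma sign_LE (a : ℕ) (k : ℤ) (h : Even a ∨ 0 ≤ k) :
    0 < (-1:ℝ)^(a/2) * LEc a k := by
  unfold LEc
  have h1 := sign_lam a k h
  have h2 : (0:ℝ) < (2:ℝ)^((1/2:ℝ)+(((a+1)/2 : ℕ):ℝ)) := Real.rpow_pos_of_pos (by norm_num) _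
  have h3 : (0:ℝ) < (Real.sqrt Real.pi)⁻¹ := by
    have := Real.sqrt_pos.mpr Real.pi_pos
    positivity
  have e : (-1:ℝ)^(a/2) * ((2:ℝ)^((1/2:ℝ)+(((a+1)/2 : ℕ):ℝ)) * (Real.sqrt Real.pi)⁻¹
      * ((-1:ℝ)^a * lam a k))
      = ((2:ℝ)^((1/2:ℝ)+(((a+1)/2 : ℕ):ℝ)) * (Real.sqrt Real.pi)⁻¹)
        * ((-1:ℝ)^(a/2) * ((-1:ℝ)^a * lam a k)) := by ring
  rw [e]
  exact mul_pos (mul_pos h2 h3) h1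

theorem stmt_18' (a : ℕ) (k : ℤ) (h : Even a ∨ 0 ≤ k) :
    ∃ c C : ℝ, ∃ D₀ : ℕ, 0 < c ∧ c ≤ C ∧ ∀ d : ℕ, D₀ ≤ d →
      c * (d : ℝ) ^ (-(1 / 2 : ℝ) - (((a + 1) / 2 : ℕ) : ℝ)) ≤ |Afun d a k| ∧
      |Afun d a k| ≤ C * (d : ℝ) ^ (-(1 / 2 : ℝ) - (((a + 1) / 2 : ℕ) : ℝ)) ∧
      Real.sign (Afun d a k) = (-1 : ℝ) ^ (a / 2 : ℕ) := by
  set J : ℕ := (a+1)/2 with hJdef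
  set x : ℝ := (1/2:ℝ) + (J:ℝ) with hxdef
  set ε : ℝ := (-1:ℝ)^(a/2) with hεdef
  have hε2 : ε * ε = 1 := by
    rw [hεdef, ← pow_add]
    exact Even.neg_one_pow ⟨a/2, rfl⟩
  have hεabs : |ε| = 1 := by
    rw [hεdef, abs_pow, abs_neg, abs_one, one_pow]
  have h' : Even a ∨ 0 ≤ k + 1 := by
    rcases h with he | hk
    · exact Or.inl he
    · exact Or.inr (by omega)
  have hL1 : 0 < ε * LEc a k := sign_LE a k h
  have hL1' : 0 < ε * LEc a (k+1) := sign_LE a (k+1) h'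
  have hL2 : 0 < ε * ((LEc a k + LEc a (k+1))/2) := by
    have e : ε * ((LEc a k + LEc a (k+1))/2) = (ε * LEc a k + ε * LEc a (k+1))/2 := by ring
    rw [e]
    linarith
  set m : ℝ := min (ε * LEc a k) (ε * ((LEc a k + LEc a (k+1))/2)) / 2 with hmdef
  set M : ℝ := max (ε * LEc a k) (ε * ((LEc a k + LEc a (k+1))/2)) * 2 with hMdef
  have hm0 : 0 < m := by
    rw [hmdef]
    have := lt_min hL1 hL2
    linarith
  have hmM : m ≤ M := by
    rw [hmdef, hMdef]
    have h1 : min (ε * LEc a k) (ε * ((LEc a k + LEc a (k+1))/2))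
        ≤ max (ε * LEc a k) (ε * ((LEc a k + LEc a (k+1))/2)) := min_le_max
    have h2 : 0 < max (ε * LEc a k) (ε * ((LEc a k + LEc a (k+1))/2)) := lt_of_lt_of_le hL1 (le_max_left _ _)
    linarith
  -- eventual bounds on the even subsequence
  have hfE := (even_tendsto a k).const_mul ε
  have hfO := (odd_tendsto a k).const_mul ε
  have hmE : m < ε * LEc a k := by
    rw [hmdef]
    have := min_le_left (ε * LEc a k) (ε * ((LEc a k + LEc a (k+1))/2))
    linarith
  have hME : ε * LEc a k < M := by
    rw [hMdef]
    have := le_max_left (ε * LEc a k) (ε * ((LEc a k + LEc a (k+1))/2))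
    linarith
  have hmO : m < ε * ((LEc a k + LEc a (k+1))/2) := by
    rw [hmdef]
    have := min_le_right (ε * LEc a k) (ε * ((LEc a k + LEc a (k+1))/2))
    linarith
  have hMO : ε * ((LEc a k + LEc a (k+1))/2) < M := by
    rw [hMdef]
    have := le_max_right (ε * LEc a k) (ε * ((LEc a k + LEc a (k+1))/2))
    linarith
  obtain ⟨NE, hNE⟩ := Filter.eventually_atTop.mp
    ((hfE.eventually_const_lt hmE).and (hfE.eventually_lt_const hME))
  obtain ⟨NO, hNO⟩ := Filter.eventually_atTop.mp
    ((hfO.eventually_const_lt hmO).and (hfO.eventually_lt_const hMO))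
  -- the common final step
  have main : ∀ d : ℕ, 1 ≤ d →
      m < ε * (((d:ℕ):ℝ)^x * Afun d a k) → ε * (((d:ℕ):ℝ)^x * Afun d a k) < M →
      m * (d : ℝ) ^ (-(1 / 2 : ℝ) - ((J : ℕ) : ℝ)) ≤ |Afun d a k| ∧
      |Afun d a k| ≤ M * (d : ℝ) ^ (-(1 / 2 : ℝ) - ((J : ℕ) : ℝ)) ∧
      Real.sign (Afun d a k) = ε := by
    intro d hd hlow hhigh
    have hdR : (0:ℝ) < (d:ℝ) := by exact_mod_cast hd
    have hP : (0:ℝ) < ((d:ℕ):ℝ)^x := Real.rpow_pos_of_pos hdR x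
    have hexp : -(1 / 2 : ℝ) - ((J : ℕ) : ℝ) = -x := by rw [hxdef]; ring
    have hPinv : (d : ℝ) ^ (-(1 / 2 : ℝ) - ((J : ℕ) : ℝ)) = (((d:ℕ):ℝ)^x)⁻¹ := by
      rw [hexp, Real.rpow_neg (le_of_lt hdR)]
    have hsA : 0 < ε * Afun d a k := by
      have h1 : ε * (((d:ℕ):ℝ)^x * Afun d a k) = ((d:ℕ):ℝ)^x * (ε * Afun d a k) := by ring
      nlinarith [hm0, hlow, hP]
    have habsA : |Afun d a k| = ε * Afun d a k := by
      have h1 : |ε * Afun d a k| = ε * Afun d a k := abs_of_pos hsA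
      have h2 : |ε * Afun d a k| = |ε| * |Afun d a k| := abs_mul _ _
      rw [hεabs, one_mul] at h2
      rw [← h2, h1]
    have key : ε * Afun d a k = (ε * (((d:ℕ):ℝ)^x * Afun d a k)) * (((d:ℕ):ℝ)^x)⁻¹ := by
      field_simp
    constructor
    · rw [hPinv, habsA, key]
      exact mul_le_mul_of_nonneg_right hlow.le (inv_nonneg.mpr hP.le)
    constructor
    · rw [hPinv, habsA, key]
      exact mul_le_mul_of_nonneg_right hhigh.le (inv_nonneg.mpr hP.le)
    · rcases Nat.even_or_odd (a/2) with he | ho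
      · have hε1 : ε = 1 := by rw [hεdef]; exact Even.neg_one_pow he
        rw [hε1, one_mul] at hsA
        rw [hε1]
        exact Real.sign_of_pos hsA
      · have hε1 : ε = -1 := by rw [hεdef]; exact Odd.neg_one_pow ho
        rw [hε1] at hsA
        have : Afun d a k < 0 := by linarith
        rw [hε1]
        exact Real.sign_of_neg this
  refine ⟨m, M, 2*(max NE NO)+2, hm0, hmM, ?_⟩
  intro d hd
  rcases Nat.even_or_odd d with ⟨n, hn⟩ | ⟨n, hn⟩
  · have hdn : d = 2*n := by omega
    have hnN : NE ≤ n := by omega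
    obtain ⟨hlow, hhigh⟩ := hNE n hnN
    have hd1 : 1 ≤ d := by omega
    have := main d hd1 (by rw [hdn]; exact hlow) (by rw [hdn]; exact hhigh)
    exact this
  · have hdn : d = 2*n+1 := by omega
    have hnN : NO ≤ n := by omega
    obtain ⟨hlow, hhigh⟩ := hNO n hnN
    have hd1 : 1 ≤ d := by omega
    have := main d hd1 (by rw [hdn]; exact hlow) (by rw [hdn]; exact hhigh)
    exact this

/-- for fixed `a ∈ ℕ` and `k ∈ ℤ` with `a` even or `k ≥ 0`, for all large `d`,
`|A_a(d,k)| = Θ(d^{−1/2−⌈a/2⌉})` and `sign(A_a(d,k)) = (−1)^{⌊a/2⌋}`.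
Here `⌈a/2⌉ = (a+1)/2` and `⌊a/2⌋ = a/2` in natural division. -/
theorem stmt_18 (a : ℕ) (k : ℤ) (h : Even a ∨ 0 ≤ k) :
    ∃ c C : ℝ, ∃ D₀ : ℕ, 0 < c ∧ c ≤ C ∧ ∀ d : ℕ, D₀ ≤ d →
      c * (d : ℝ) ^ (-(1 / 2 : ℝ) - (((a + 1) / 2 : ℕ) : ℝ)) ≤ |Afun d a k| ∧
      |Afun d a k| ≤ C * (d : ℝ) ^ (-(1 / 2 : ℝ) - (((a + 1) / 2 : ℕ) : ℝ)) ∧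
      Real.sign (Afun d a k) = (-1 : ℝ) ^ (a / 2 : ℕ) :=
  stmt_18' a k h
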